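/- arXiv:2601.11961 — 4 statements merged into one kernel-verified Lean document; each statement's English description precedes it below -/
import Mathlib

section
/- Let K be a number field, let 𝔣 be a nonzero integral ideal of O_K, let ε_1, …, ε_m be generators of the group O_K^{+×} of totally positive units, and set J(K) = Σ_{j=1}^m (ε_j − 1)O_K. Then O_𝔣^{+×} = O_K^{+×} if and only if 𝔣 divides J(K), i.e. if and only if J(K) ⊆ 𝔣. -/
open NumberField

namespace Ideal

variable {R : Type*} [CommRing R] (I : Ideal R)

def unitsCongrOne : Subgroup Rˣ :=
  (Units.map (Ideal.Quotient.mk I : R →* R ⧸ I)).ker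

variable {I}

theorem mem_unitsCongrOne {u : Rˣ} : u ∈ I.unitsCongrOne ↔ (u : R) - 1 ∈ I := by
  rw [unitsCongrOne, MonoidHom.mem_ker, Units.ext_iff, Units.coe_map, Units.val_one,
    ← map_one (Ideal.Quotient.mk I)]
  exact Ideal.Quotient.eq

theorem closure_range_le_unitsCongrOne_iff {ι : Type*} (ε : ι → Rˣ) :
    Subgroup.closure (Set.range ε) ≤ I.unitsCongrOne ↔
      Ideal.span (Set.range fun j => (ε j : R) - 1) ≤ I := by
  rw [Subgroup.closure_le, Ideal.span_le, Set.range_subset_iff, Set.range_subset_iff]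
  exact forall_congr' fun _ => mem_unitsCongrOne

end Ideal

theorem statement1_general
    (K : Type*) [Field K]
    (P : Subgroup ((RingOfIntegers K)ˣ))
    (𝔣 : Ideal (RingOfIntegers K))
    (m : ℕ) (ε : Fin m → (RingOfIntegers K)ˣ)
    (hgen : Subgroup.closure (Set.range ε) = P) :
    (∀ u ∈ P, ((u : (RingOfIntegers K)ˣ) : RingOfIntegers K) - 1 ∈ 𝔣) ↔
      Ideal.span (Set.range fun j =>
        ((ε j : (RingOfIntegers K)ˣ) : RingOfIntegers K) - 1) ≤ 𝔣 := by
  subst hgen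
  simpa only [SetLike.le_def, Ideal.mem_unitsCongrOne] using
    Ideal.closure_range_le_unitsCongrOne_iff ε

/-- For a nonzero integral ideal `𝔣` of a number field `K` and generators
`ε_1, …, ε_m` of the group of totally positive units, setting `J(K) = Σ_j (ε_j - 1) O_K`,
one has `O_𝔣^{+×} = O_K^{+×}` (i.e. every totally positive unit is `≡ 1 mod 𝔣`)
if and only if `𝔣` divides `J(K)`, i.e. `J(K) ⊆ 𝔣`. -/
theorem statement1
    (K : Type*) [Field K] [NumberField K]
    (P : Subgroup ((RingOfIntegers K)ˣ))
    (hP : ∀ u : (RingOfIntegers K)ˣ,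
      u ∈ P ↔ ∀ σ : K →+* ℝ, 0 < σ ((u : RingOfIntegers K) : K))
    (𝔣 : Ideal (RingOfIntegers K)) (h𝔣 : 𝔣 ≠ ⊥)
    (m : ℕ) (ε : Fin m → (RingOfIntegers K)ˣ)
    (hε : ∀ j, ε j ∈ P)
    (hgen : Subgroup.closure (Set.range ε) = P) :
    (∀ u ∈ P, ((u : (RingOfIntegers K)ˣ) : RingOfIntegers K) - 1 ∈ 𝔣) ↔
      Ideal.span (Set.range fun j =>
        ((ε j : (RingOfIntegers K)ˣ) : RingOfIntegers K) - 1) ≤ 𝔣 :=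
  statement1_general K P 𝔣 m ε hgen
end

section
/- Let K be a number field of degree n ≥ 3 with exactly one complex place (i.e. exactly one conjugate pair of complex embeddings and n − 2 real embeddings). Then there are only finitely many nonzero integral ideals 𝔣 of O_K such that every totally positive unit of O_K is congruent to 1 modulo 𝔣, i.e. such that O_𝔣^{+×} = O_K^{+×}. -/
/-!
Since `K` has a real and a complex place, Dirichlet's unit theorem gives a unit `u` of infinite
order. Its square `ε = u ^ 2` is totally positive and `ε ≠ 1`, so every ideal `𝔣` in question
contains the nonzero element `ε - 1`; and a nonzero element of `𝓞 K` lies in only finitely many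
ideals, since its quotient ring is finite.
-/

open NumberField

namespace NumberField.Units

theorem embedding_sq_pos {K : Type*} [Field K] (u : (𝓞 K)ˣ) (σ : K →+* ℝ) :
    0 < σ (((u ^ 2 : (𝓞 K)ˣ) : 𝓞 K) : K) := by
  simp only [Units.val_pow_eq_pow_val, map_pow]
  exact pow_two_pos_of_ne_zero ((map_ne_zero σ).mpr (coe_ne_zero u))

variable {K : Type*} [Field K] [NumberField K]

theorem exists_sq_ne_one_of_ne {w₁ w₂ : InfinitePlace K} (h : w₁ ≠ w₂) :
    ∃ u : (𝓞 K)ˣ, u ^ 2 ≠ 1 := by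
  obtain ⟨u, hu⟩ := dirichletUnitTheorem.exists_unit K w₂
  have hpos : 0 < w₁ u := InfinitePlace.pos_iff.mpr (coe_ne_zero u)
  have hlt : w₁ u < 1 := (Real.log_neg_iff hpos).mp (hu w₁ h)
  refine ⟨u, fun h1 => ?_⟩
  have hsq : w₁ u ^ 2 = 1 := by
    rw [← map_pow, ← coe_pow, h1, coe_one, map_one]
  nlinarith

end NumberField.Units

theorem statement2_general
    (K : Type*) [Field K] [NumberField K]
    (n : ℕ) (hn3 : 3 ≤ n)
    (hcomplex : Nat.card {w : InfinitePlace K // w.IsComplex} = 1)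
    (hreal : Nat.card {w : InfinitePlace K // w.IsReal} = n - 2)
    (P : Subgroup ((RingOfIntegers K)ˣ))
    (hP : ∀ u : (RingOfIntegers K)ˣ,
      u ∈ P ↔ ∀ σ : K →+* ℝ, 0 < σ ((u : RingOfIntegers K) : K)) :
    {𝔣 : Ideal (RingOfIntegers K) | 𝔣 ≠ ⊥ ∧
      ∀ u ∈ P, ((u : (RingOfIntegers K)ˣ) : RingOfIntegers K) - 1 ∈ 𝔣}.Finite := by
  obtain ⟨wc, hwc⟩ : Nonempty {w : InfinitePlace K // w.IsComplex} :=
    (Nat.card_pos_iff.mp (by omega)).1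
  obtain ⟨wr, hwr⟩ : Nonempty {w : InfinitePlace K // w.IsReal} :=
    (Nat.card_pos_iff.mp (by omega)).1
  obtain ⟨u, hu⟩ := Units.exists_sq_ne_one_of_ne (InfinitePlace.ne_of_isReal_isComplex hwr hwc)
  have hu2 : u ^ 2 ∈ P := (hP _).mpr (Units.embedding_sq_pos u)
  have hne : ((u ^ 2 : (𝓞 K)ˣ) : 𝓞 K) - 1 ≠ 0 := sub_ne_zero.mpr (Units.val_eq_one.not.mpr hu)
  exact (Ring.HasFiniteQuotients.finite_setOfPred_mem _ hne).subset fun 𝔣 h𝔣 => h𝔣.2 _ hu2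

/-- Let `K` be a number field of degree `n ≥ 3` with exactly one complex
place (one conjugate pair of complex embeddings and `n - 2` real embeddings). Then there
are only finitely many nonzero integral ideals `𝔣` of `O_K` such that every totally
positive unit of `O_K` is congruent to `1` modulo `𝔣`. -/
theorem statement2
    (K : Type*) [Field K] [NumberField K]
    (n : ℕ) (hn : Module.finrank ℚ K = n) (hn3 : 3 ≤ n)
    (hcomplex : Nat.card {w : InfinitePlace K // w.IsComplex} = 1)
    (hreal : Nat.card {w : InfinitePlace K // w.IsReal} = n - 2)
    (P : Subgroup ((RingOfIntegers K)ˣ))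
    (hP : ∀ u : (RingOfIntegers K)ˣ,
      u ∈ P ↔ ∀ σ : K →+* ℝ, 0 < σ ((u : RingOfIntegers K) : K)) :
    {𝔣 : Ideal (RingOfIntegers K) | 𝔣 ≠ ⊥ ∧
      ∀ u ∈ P, ((u : (RingOfIntegers K)ˣ) : RingOfIntegers K) - 1 ∈ 𝔣}.Finite :=
  statement2_general K n hn3 hcomplex hreal P hP
end

section
/- Let r ≥ 0 be an integer, z ∈ ℂ, and τ_0, …, τ_r ∈ ℂ with Im(τ_j) > 0 for all 0 ≤ j ≤ r. Assume that exp(2πi(z + Σ_{j=0}^r m_jτ_j)) ≠ 1 for every m ∈ ℕ^{r+1}. Then the family indexed by m = (m_0, …, m_r) ∈ ℕ^{r+1} of factors (1 − exp(2πi(−z + Σ_{j=0}^r (m_j+1)τ_j))) · (1 − exp(2πi(z + Σ_{j=0}^r m_jτ_j)))^{(−1)^r} is multipliable, i.e. the infinite product defining the multiple elliptic Gamma function G_r(z, τ_0, …, τ_r) converges. -/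
open scoped Real

open Complex Finset

/-! Both factors are of the form `1 - q` where `‖q‖` is bounded by a product of geometric
sequences `∏ j, ‖exp (2πiτ_j)‖ ^ m_j`, hence summable over `ℕ^{r+1}`. In a complete normed field
`∏ (1 - q)` then converges, and when no factor vanishes its value is nonzero, so the inverse
product (needed for odd `r`) converges as well. -/

theorem summable_fin_prod_apply_of_nonneg {β : Type*} {n : ℕ} {f : Fin n → β → ℝ}
    (hf₀ : ∀ j, 0 ≤ f j) (hf : ∀ j, Summable (f j)) :
    Summable fun m : Fin n → β => ∏ j, f j (m j) := by
  induction n with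
  | zero => exact .of_finite
  | succ n ih =>
    have htail : Summable fun m : Fin n → β => ∏ j, f j.succ (m j) :=
      ih (fun j => hf₀ j.succ) fun j => hf j.succ
    have htail₀ : 0 ≤ fun m : Fin n → β => ∏ j, f j.succ (m j) :=
      fun m => prod_nonneg fun j _ => hf₀ j.succ (m j)
    have hprod := (hf 0).mul_of_nonneg htail (hf₀ 0) htail₀
    refine (Fin.consEquiv fun _ => β).summable_iff.mp (hprod.congr fun p => ?_)
    simp only [Function.comp_apply, Fin.consEquiv_apply, Fin.prod_univ_succ, Fin.cons_zero,
      Fin.cons_succ]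

lemma norm_exp_two_pi_I_add_sum {n : ℕ} (w : ℂ) (τ : Fin n → ℂ) (m : Fin n → ℕ) :
    ‖exp (2 * π * I * (w + ∑ j, (m j : ℂ) * τ j))‖ =
      ‖exp (2 * π * I * w)‖ * ∏ j, ‖exp (2 * π * I * τ j)‖ ^ m j := by
  have hterm : ∀ j, exp (2 * π * I * ((m j : ℂ) * τ j)) = exp (2 * π * I * τ j) ^ m j :=
    fun j => by
      rw [← exp_nat_mul]
      ring_nf
  simp only [mul_add, mul_sum, exp_add, exp_sum, hterm, norm_mul, norm_prod, norm_pow]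

lemma summable_norm_exp_two_pi_I_add_sum {n : ℕ} (w : ℂ) {τ : Fin n → ℂ}
    (hτ : ∀ j, 0 < (τ j).im) :
    Summable fun m : Fin n → ℕ => ‖exp (2 * π * I * (w + ∑ j, (m j : ℂ) * τ j))‖ := by
  simp only [norm_exp_two_pi_I_add_sum]
  refine .mul_left _ <| summable_fin_prod_apply_of_nonneg (fun j k => by positivity) fun j =>
    summable_geometric_of_lt_one (norm_nonneg _)
      (UpperHalfPlane.norm_exp_two_pi_I_lt_one ⟨τ j, hτ j⟩)

section OneSub

variable {ι : Type*}

lemma multipliable_one_sub_of_summable_norm {R : Type*} [NormedCommRing R] [NormOneClass R]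
    [CompleteSpace R] {f : ι → R} (hf : Summable (‖f ·‖)) : Multipliable fun i => 1 - f i := by
  simpa only [sub_eq_add_neg] using
    multipliable_one_add_of_summable (f := (-f ·)) (by simpa only [norm_neg])

lemma multipliable_one_sub_zpow_of_summable_norm {K : Type*} [NormedField K] [CompleteSpace K]
    {f : ι → K} (hf : Summable (‖f ·‖)) (hf₁ : ∀ i, f i ≠ 1) (k : ℤ) :
    Multipliable fun i => (1 - f i) ^ k := by
  have hM := multipliable_one_sub_of_summable_norm hf
  have hne : ∏' i, (1 - f i) ≠ 0 := by
    simpa only [sub_eq_add_neg] using tprod_one_add_ne_zero_of_summable (f := (-f ·))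
      (fun i => by simpa [← sub_eq_add_neg, sub_eq_zero] using (hf₁ i).symm) (by simpa)
  cases k with
  | ofNat n => simpa using hM.pow n
  | negSucc n => simpa only [zpow_negSucc, inv_pow] using (hM.inv₀ hne).pow (n + 1)

end OneSub

/-- Convergence of the infinite product defining the multiple elliptic
Gamma function `G_r`: for `z ∈ ℂ` and `τ_0, …, τ_r` in the upper half-plane such that no
factor of the product vanishes, the family of factors indexed by `m ∈ ℕ^{r+1}` is
multipliable. -/
theorem statement4
    (r : ℕ) (z : ℂ) (τ : Fin (r + 1) → ℂ)
    (hτ : ∀ j, 0 < (τ j).im)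
    (hz : ∀ m : Fin (r + 1) → ℕ,
      Complex.exp (2 * (π : ℂ) * Complex.I * (z + ∑ j, (m j : ℂ) * τ j)) ≠ 1) :
    Multipliable (fun m : Fin (r + 1) → ℕ =>
      (1 - Complex.exp (2 * (π : ℂ) * Complex.I * (-z + ∑ j, ((m j : ℂ) + 1) * τ j))) *
      (1 - Complex.exp (2 * (π : ℂ) * Complex.I * (z + ∑ j, (m j : ℂ) * τ j)))
        ^ ((-1 : ℤ) ^ r)) := by
  have hshift : ∀ m : Fin (r + 1) → ℕ,
      (-z + ∑ j, τ j) + ∑ j, (m j : ℂ) * τ j = -z + ∑ j, ((m j : ℂ) + 1) * τ j := fun m => by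
    rw [add_assoc, ← sum_add_distrib]
    simp only [add_mul, one_mul, add_comm]
  have hfirst := summable_norm_exp_two_pi_I_add_sum (-z + ∑ j, τ j) hτ
  simp only [hshift] at hfirst
  exact (multipliable_one_sub_of_summable_norm hfirst).mul
    (multipliable_one_sub_zpow_of_summable_norm (summable_norm_exp_two_pi_I_add_sum z hτ) hz _)
end

section
/- Let r ≥ 1 be an integer, z ∈ ℂ, and τ_0, …, τ_r ∈ ℂ with Im(τ_j) > 0 for all 0 ≤ j ≤ r, such that no factor of the defining products below vanishes. Then for each 0 ≤ k ≤ r the pseudo-periodicity relation holds: G_r(z + τ_k, τ_0, …, τ_r) = G_{r−1}(z, τ_0, …, τ̂_k, …, τ_r) · G_r(z, τ_0, …, τ_r), where τ̂_k means that the argument τ_k is omitted. -/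
open scoped Real

/-- The multiple elliptic Gamma function `G_r`, defined by its infinite product over
`m ∈ ℕ^{r+1}`. -/
noncomputable def Gr (r : ℕ) (z : ℂ) (τ : Fin (r + 1) → ℂ) : ℂ :=
  ∏' m : Fin (r + 1) → ℕ,
    (1 - Complex.exp (2 * (π : ℂ) * Complex.I * (-z + ∑ j, ((m j : ℂ) + 1) * τ j))) *
    (1 - Complex.exp (2 * (π : ℂ) * Complex.I * (z + ∑ j, (m j : ℂ) * τ j)))
      ^ ((-1 : ℤ) ^ r)

/-!
With `e(x) = exp(2πix)`, write `G_r(z, τ) = A · B^{(-1)^r}`, where `A` and `B` are products of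
`1 - e(w + c · τ)` over `c ∈ ℕ^{r+1}`, with `w = -z + Σ τ_j` for `A` and `w = z` for `B`. Splitting
the lattice according to whether `c_k = 0` factors every such product
`P_τ(w) = ∏_c (1 - e(w + c · τ))` as `P_τ(w) = P_{τ̂}(w) · P_τ(w + τ_k)`. Applied to `A` at
`w = -z - τ_k + Σ τ_j` and to `B` at `w = z`, this gives the relation: the `B`-factors over
`c_k = 0` enter with exponents `(-1)^r` and `(-1)^{r+1}` and cancel. Since `|e(τ_j)| < 1` all
products converge absolutely, hence unconditionally, so they may be split and regrouped.
-/

open Complex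

theorem summable_pi_prod_of_nonneg {β : Type*} :
    ∀ {n : ℕ} {f : Fin n → β → ℝ}, (∀ j b, 0 ≤ f j b) → (∀ j, Summable (f j)) →
      Summable fun m : Fin n → β => ∏ j, f j (m j)
  | 0, _, _, _ => .of_finite
  | n + 1, f, hf0, hf => by
    have htail := summable_pi_prod_of_nonneg (f := fun j => f j.succ) (fun j => hf0 j.succ)
      (fun j => hf j.succ)
    have hmul := (hf 0).mul_of_nonneg htail (hf0 0) fun m => Finset.prod_nonneg fun j _ => hf0 _ _
    refine (Fin.consEquiv fun _ => β).summable_iff.mp (hmul.congr fun p => ?_)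
    simp [Fin.consEquiv, Fin.prod_univ_succ]

theorem HasProd.zpow₀ {ι K : Type*} [Field K] [TopologicalSpace K] [ContinuousInv₀ K]
    [ContinuousMul K] {f : ι → K} {a : K} (h : HasProd f a) (ha : a ≠ 0) (m : ℤ) :
    HasProd (fun i => f i ^ m) (a ^ m) := by
  simp_rw [HasProd, Finset.prod_zpow]
  exact Filter.Tendsto.zpow₀ h m (Or.inl ha)

theorem HasProd.mul_of_zero_of_succ {ι α : Type*} [CommMonoid α] [TopologicalSpace α]
    [ContinuousMul α] {f : ℕ × ι → α} {a b : α} (h₀ : HasProd (fun x => f (0, x)) a)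
    (h₁ : HasProd (fun p : ℕ × ι => f (p.1 + 1, p.2)) b) : HasProd f (a * b) := by
  have hinj₀ : Function.Injective fun x : ι => ((0, x) : ℕ × ι) := fun x y h => by
    simpa using h
  have hinj₁ : Function.Injective fun p : ℕ × ι => (p.1 + 1, p.2) := fun p q h => by
    simpa [Prod.ext_iff] using h
  refine HasProd.mul_isCompl ?_ ((hinj₀.hasProd_range_iff).mpr h₀)
    ((hinj₁.hasProd_range_iff).mpr h₁)
  rw [isCompl_iff, disjoint_iff, codisjoint_iff]
  constructor <;> ext ⟨_ | n, x⟩ <;> simp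

noncomputable def latticeFactor {n : ℕ} (τ : Fin n → ℂ) (w : ℂ) (c : Fin n → ℕ) : ℂ :=
  1 - exp (2 * (π : ℂ) * I * (w + ∑ j, (c j : ℂ) * τ j))

theorem summable_norm_exp_lattice {n : ℕ} {τ : Fin n → ℂ} (hτ : ∀ j, 0 < (τ j).im) (w : ℂ) :
    Summable fun c : Fin n → ℕ => ‖exp (2 * (π : ℂ) * I * (w + ∑ j, (c j : ℂ) * τ j))‖ := by
  have hq := fun j => UpperHalfPlane.norm_exp_two_pi_I_lt_one ⟨τ j, hτ j⟩
  have := summable_pi_prod_of_nonneg (f := fun j m => ‖exp (2 * (π : ℂ) * I * τ j)‖ ^ m)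
    (fun _ _ => by positivity) fun j => summable_geometric_of_lt_one (norm_nonneg _) (hq j)
  refine (this.mul_left ‖exp (2 * (π : ℂ) * I * w)‖).congr fun c => ?_
  rw [mul_add, exp_add, norm_mul, Finset.mul_sum, exp_sum, norm_prod]
  congr 1
  refine Finset.prod_congr rfl fun j _ => ?_
  rw [← norm_pow, ← exp_nat_mul]
  ring_nf

theorem multipliable_latticeFactor {n : ℕ} {τ : Fin n → ℂ} (hτ : ∀ j, 0 < (τ j).im) (w : ℂ) :
    Multipliable (latticeFactor τ w) := by
  unfold latticeFactor
  simp_rw [sub_eq_add_neg]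
  exact multipliable_one_add_of_summable (by simpa using summable_norm_exp_lattice hτ w)

theorem tprod_latticeFactor_ne_zero {n : ℕ} {τ : Fin n → ℂ} (hτ : ∀ j, 0 < (τ j).im) {w : ℂ}
    (h : ∀ c, latticeFactor τ w c ≠ 0) : ∏' c, latticeFactor τ w c ≠ 0 := by
  simp_rw [latticeFactor, sub_eq_add_neg] at h ⊢
  exact tprod_one_add_ne_zero_of_summable h (by simpa using summable_norm_exp_lattice hτ w)

theorem latticeFactor_insertNth {n : ℕ} (τ : Fin (n + 1) → ℂ) (w : ℂ) (k : Fin (n + 1)) (a : ℕ)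
    (x : Fin n → ℕ) :
    latticeFactor τ w (k.insertNth a x) =
      latticeFactor (fun j => τ (k.succAbove j)) (w + a * τ k) x := by
  simp only [latticeFactor, Fin.sum_univ_succAbove _ k, Fin.insertNth_apply_same,
    Fin.insertNth_apply_succAbove, add_assoc]

theorem hasProd_latticeFactor_of_succAbove {n : ℕ} {τ : Fin (n + 1) → ℂ} {w a b : ℂ}
    (k : Fin (n + 1)) (ha : HasProd (latticeFactor (fun j => τ (k.succAbove j)) w) a)
    (hb : HasProd (latticeFactor τ (w + τ k)) b) : HasProd (latticeFactor τ w) (a * b) := by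
  rw [← (Fin.insertNthEquiv (fun _ => ℕ) k).hasProd_iff] at hb ⊢
  change HasProd (fun p : ℕ × _ => latticeFactor τ (w + τ k) (k.insertNth p.1 p.2)) b at hb
  refine HasProd.mul_of_zero_of_succ (f := fun p => latticeFactor τ w (k.insertNth p.1 p.2)) ?_ ?_
  · simpa only [latticeFactor_insertNth, Nat.cast_zero, zero_mul, add_zero] using ha
  · convert hb using 2 with p
    simp only [latticeFactor_insertNth]
    push_cast
    ring_nf

theorem Gr_eq_tprod_mul_zpow {r : ℕ} {z : ℂ} {τ : Fin (r + 1) → ℂ} (hτ : ∀ j, 0 < (τ j).im)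
    (hz : ∏' c, latticeFactor τ z c ≠ 0) :
    Gr r z τ = (∏' c, latticeFactor τ (-z + ∑ j, τ j) c) *
      (∏' c, latticeFactor τ z c) ^ ((-1 : ℤ) ^ r) := by
  refine HasProd.tprod_eq ?_
  convert (multipliable_latticeFactor hτ _).hasProd.mul
    ((multipliable_latticeFactor hτ z).hasProd.zpow₀ hz _) using 4 with c
  · simp only [latticeFactor, add_mul, one_mul, Finset.sum_add_distrib]
    ring_nf
  · rfl

theorem statement6_general
    (r : ℕ) (z : ℂ) (τ : Fin (r + 2) → ℂ)
    (hτ : ∀ j, 0 < (τ j).im)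
    (k : Fin (r + 2))
    (hA : ∀ c : Fin (r + 2) → ℕ,
      1 - Complex.exp (2 * (π : ℂ) * Complex.I * (z + ∑ j, (c j : ℂ) * τ j)) ≠ 0) :
    Gr (r + 1) (z + τ k) τ = Gr r z (fun j => τ (k.succAbove j)) * Gr (r + 1) z τ := by
  set τ' := fun j => τ (k.succAbove j)
  have hτ' : ∀ j, 0 < (τ' j).im := fun j => hτ _
  have hsplitB := hasProd_latticeFactor_of_succAbove k (multipliable_latticeFactor hτ' z).hasProd
    (multipliable_latticeFactor hτ (z + τ k)).hasProd
  have hsplitA : HasProd (latticeFactor τ (-(z + τ k) + ∑ j, τ j))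
      ((∏' c, latticeFactor τ' (-z + ∑ j, τ' j) c) * ∏' c, latticeFactor τ (-z + ∑ j, τ j) c) := by
    have hw : -(z + τ k) + ∑ j, τ j = -z + ∑ j, τ' j := by
      rw [Fin.sum_univ_succAbove _ k]; ring
    refine hasProd_latticeFactor_of_succAbove k ?_ ?_
    · rw [hw]; exact (multipliable_latticeFactor hτ' _).hasProd
    · rw [show -(z + τ k) + ∑ j, τ j + τ k = -z + ∑ j, τ j by ring]
      exact (multipliable_latticeFactor hτ _).hasProd
  have hB : ∏' c, latticeFactor τ z c ≠ 0 := tprod_latticeFactor_ne_zero hτ hA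
  obtain ⟨hB', hBk⟩ := mul_ne_zero_iff.mp (hsplitB.tprod_eq ▸ hB)
  rw [Gr_eq_tprod_mul_zpow hτ hBk, Gr_eq_tprod_mul_zpow hτ' hB', Gr_eq_tprod_mul_zpow hτ hB,
    hsplitA.tprod_eq, hsplitB.tprod_eq, mul_zpow, pow_succ, mul_neg_one]
  simp only [zpow_neg]
  field_simp

/-- Pseudo-periodicity of the multiple elliptic Gamma functions (stated
for `G_{r+1}`, i.e. for degree `≥ 1`): for parameters in the upper half-plane such that
no factor of the defining products vanishes,
`G_{r+1}(z + τ_k, τ) = G_r(z, τ with τ_k omitted) ⬝ G_{r+1}(z, τ)`.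
The two non-vanishing hypotheses say exactly that no factor of the three products
involved vanishes. -/
theorem statement6
    (r : ℕ) (z : ℂ) (τ : Fin (r + 2) → ℂ)
    (hτ : ∀ j, 0 < (τ j).im)
    (k : Fin (r + 2))
    (hA : ∀ c : Fin (r + 2) → ℕ,
      1 - Complex.exp (2 * (π : ℂ) * Complex.I * (z + ∑ j, (c j : ℂ) * τ j)) ≠ 0)
    (hB : ∀ c : Fin (r + 2) → ℕ, (∀ j, j ≠ k → 1 ≤ c j) →
      1 - Complex.exp (2 * (π : ℂ) * Complex.I * (-z + ∑ j, (c j : ℂ) * τ j)) ≠ 0) :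
    Gr (r + 1) (z + τ k) τ = Gr r z (fun j => τ (k.succAbove j)) * Gr (r + 1) z τ :=
  statement6_general r z τ hτ k hA
end
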